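/- Let T' be a tree with bipartition (A',B'), |A'| ≤ |B'|, and γ(T') = |A'|. Let T be obtained from T' by adding a new vertex b adjacent to a vertex a' ∈ A'. Then γ(T) = |A'|, so the domination number of T equals the size of its smaller partite set A'. -/

import Mathlib

open Finset

variable {V : Type} [Fintype V] [DecidableEq V]

def IsDomSet (G : SimpleGraph V) (D : Finset V) : Prop :=
  ∀ v : V, v ∉ D → ∃ u ∈ D, G.Adj u v

noncomputable def domNum (G : SimpleGraph V) : ℕ :=
  sInf {n | ∃ D : Finset V, IsDomSet G D ∧ D.card = n}

def IsVertexCover (G : SimpleGraph V) (C : Finset V) : Prop :=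
  ∀ ⦃u v : V⦄, G.Adj u v → u ∈ C ∨ v ∈ C

noncomputable def coverNum (G : SimpleGraph V) : ℕ :=
  sInf {n | ∃ C : Finset V, IsVertexCover G C ∧ C.card = n}

def IsIndepFinset (G : SimpleGraph V) (I : Finset V) : Prop :=
  ∀ u ∈ I, ∀ v ∈ I, ¬ G.Adj u v

noncomputable def indepNum (G : SimpleGraph V) : ℕ :=
  sSup {n | ∃ I : Finset V, IsIndepFinset G I ∧ I.card = n}

def IsLeaf (G : SimpleGraph V) [DecidableRel G.Adj] (v : V) : Prop :=
  G.degree v = 1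

def IsSupport (G : SimpleGraph V) [DecidableRel G.Adj] (v : V) : Prop :=
  ∃ u, G.Adj v u ∧ IsLeaf G u

def IsWeakSupport (G : SimpleGraph V) [DecidableRel G.Adj] (v : V) : Prop :=
  ((G.neighborFinset v).filter fun l => G.degree l = 1).card = 1

def IsBipartition (G : SimpleGraph V) (A B : Finset V) : Prop :=
  A ∪ B = Finset.univ ∧ Disjoint A B ∧
    ∀ ⦃u v : V⦄, G.Adj u v → (u ∈ A ∧ v ∈ B) ∨ (u ∈ B ∧ v ∈ A)

/-- The tree obtained from `T'` by adding a new vertex (the unique element of `Unit`)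
joined to the vertex `a'`. -/
def addLeaf (T' : SimpleGraph V) (a' : V) : SimpleGraph (V ⊕ Unit) where
  Adj x y :=
    match x, y with
    | Sum.inl u, Sum.inl v => T'.Adj u v
    | Sum.inl u, Sum.inr _ => u = a'
    | Sum.inr _, Sum.inl v => v = a'
    | Sum.inr _, Sum.inr _ => False
  symm := by
    constructor
    intro x y h
    cases x <;> cases y <;> simp_all <;> exact h.symm
  loopless := by
    constructor
    intro x
    cases x <;> simp

/-!
Since `T'` is connected, every vertex outside the vertex cover `A'` has a neighbour in `A'`, so
`A'` dominates `T'`; as `a' ∈ A'` it also dominates the new leaf, giving `γ(T) ≤ |A'|`.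
Conversely, replacing the new leaf by `a'` maps a dominating set of `T` onto a dominating set of
`T'` of no larger size, so `γ(T') ≤ γ(T)`.
-/

omit [Fintype V] [DecidableEq V] in
lemma domNum_le_card {G : SimpleGraph V} {D : Finset V} (hD : IsDomSet G D) :
    domNum G ≤ D.card :=
  Nat.sInf_le ⟨D, hD, rfl⟩

omit [DecidableEq V] in
lemma exists_isDomSet_card_eq_domNum (G : SimpleGraph V) :
    ∃ D : Finset V, IsDomSet G D ∧ D.card = domNum G := by
  have hne : {n | ∃ D : Finset V, IsDomSet G D ∧ D.card = n}.Nonempty :=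
    ⟨_, univ, fun v hv => absurd (mem_univ v) hv, rfl⟩
  exact Nat.sInf_mem hne

lemma IsBipartition.isVertexCover_left {G : SimpleGraph V} {A B : Finset V}
    (h : IsBipartition G A B) : IsVertexCover G A := fun _ _ huv =>
  (h.2.2 huv).imp And.left And.right

omit [Fintype V] [DecidableEq V] in
lemma IsVertexCover.isDomSet {G : SimpleGraph V} {C : Finset V} (hC : IsVertexCover G C)
    (hG : G.Preconnected) (hne : C.Nonempty) : IsDomSet G C := by
  intro v hv
  obtain ⟨c, hc⟩ := hne
  obtain ⟨p⟩ := hG v c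
  cases p with
  | nil => exact absurd hc hv
  | @cons _ w _ hvw _ => exact ⟨w, (hC hvw).resolve_left hv, hvw.symm⟩

omit [Fintype V] [DecidableEq V] in
lemma IsDomSet.map_inl_addLeaf {T' : SimpleGraph V} {D : Finset V} {a' : V}
    (hD : IsDomSet T' D) (ha' : a' ∈ D) :
    IsDomSet (addLeaf T' a') (D.map .inl) := by
  rintro (v | _) hv
  · obtain ⟨u, hu, huv⟩ := hD v fun h => hv (mem_map_of_mem _ h)
    exact ⟨.inl u, mem_map_of_mem _ hu, huv⟩
  · exact ⟨.inl a', mem_map_of_mem _ ha', rfl⟩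

omit [Fintype V] in
lemma IsDomSet.image_addLeaf {T' : SimpleGraph V} {D : Finset (V ⊕ Unit)} {a' : V}
    (hD : IsDomSet (addLeaf T' a') D) :
    IsDomSet T' (D.image (Sum.elim id fun _ => a')) := by
  intro v hv
  have hvD : Sum.inl v ∉ D := fun h => hv (mem_image_of_mem _ h)
  obtain ⟨u | b, hu, huv⟩ := hD (.inl v) hvD
  · exact ⟨u, mem_image_of_mem (Sum.elim id fun _ => a') hu, huv⟩
  · have hva : v = a' := huv
    exact absurd (hva ▸ mem_image_of_mem (Sum.elim id fun _ => a') hu) hv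

lemma domNum_le_domNum_addLeaf (T' : SimpleGraph V) (a' : V) :
    domNum T' ≤ domNum (addLeaf T' a') := by
  obtain ⟨D, hD, hcard⟩ := exists_isDomSet_card_eq_domNum (addLeaf T' a')
  calc domNum T' ≤ (D.image (Sum.elim id fun _ => a')).card := domNum_le_card hD.image_addLeaf
    _ ≤ D.card := card_image_le
    _ = domNum (addLeaf T' a') := hcard

theorem operation_O1_general (T' : SimpleGraph V) (A' B' : Finset V) (a' : V)
    (htree : T'.IsTree) (hbip : IsBipartition T' A' B')
    (ha' : a' ∈ A') (hdom : domNum T' = A'.card) :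
    domNum (addLeaf T' a') = A'.card := by
  have hA' : IsDomSet T' A' :=
    hbip.isVertexCover_left.isDomSet htree.connected.preconnected ⟨a', ha'⟩
  apply le_antisymm
  · calc domNum (addLeaf T' a') ≤ (A'.map .inl).card := domNum_le_card (hA'.map_inl_addLeaf ha')
      _ = A'.card := card_map _
  · exact hdom ▸ domNum_le_domNum_addLeaf T' a'

theorem operation_O1 (T' : SimpleGraph V) (A' B' : Finset V) (a' : V)
    (htree : T'.IsTree) (hbip : IsBipartition T' A' B') (hAB : A'.card ≤ B'.card)
    (ha' : a' ∈ A') (hdom : domNum T' = A'.card) :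
    domNum (addLeaf T' a') = A'.card :=
  operation_O1_general T' A' B' a' htree hbip ha' hdom
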